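/- Let F be a field, h ∈ F[x] nonzero, and regard A_h ⊆ A₁ via ŷ = yh. Then inside the Weyl algebra A₁, the identity yⁱhⁱ = ŷ(ŷ + h')(ŷ + 2h')⋯(ŷ + (i−1)h') holds for every i ≥ 1, where h' is the formal derivative of h. -/
import Mathlib


open Polynomial FreeAlgebra

/-- The defining relation of the Weyl algebra: `y * x = x * y + 1`. -/
inductive weylRel (F : Type) [Field F] : FreeAlgebra F (Fin 2) → FreeAlgebra F (Fin 2) → Prop
  | rel : weylRel F (ι F 1 * ι F 0) (ι F 0 * ι F 1 + 1)

/-- The Weyl algebra `A₁` over `F`. -/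
noncomputable abbrev Weyl (F : Type) [Field F] := RingQuot (weylRel F)

/-- The generator `x` of the Weyl algebra. -/
noncomputable def wX (F : Type) [Field F] : Weyl F := RingQuot.mkAlgHom F (weylRel F) (ι F 0)

/-- The generator `y` of the Weyl algebra. -/
noncomputable def wY (F : Type) [Field F] : Weyl F := RingQuot.mkAlgHom F (weylRel F) (ι F 1)


lemma wyx (F : Type) [Field F] : wY F * wX F = wX F * wY F + 1 := by
  have h := RingQuot.mkAlgHom_rel F (weylRel.rel (F := F))
  simpa [wX, wY, map_mul, map_add, map_one] using h

lemma comm_pow (F : Type) [Field F] (n : ℕ) :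
    wY F * wX F ^ (n + 1) = wX F ^ (n + 1) * wY F + (n + 1) • wX F ^ n := by
  induction n with
  | zero => simpa using wyx F
  | succ n ih =>
    rw [pow_succ, ← mul_assoc, ih, add_mul, mul_assoc, wyx F, mul_add, mul_one,
      smul_mul_assoc, ← pow_succ, ← mul_assoc, ← pow_succ, succ_nsmul]
    simp only [two_nsmul, succ_nsmul]; abel

lemma comm_poly (F : Type) [Field F] (p : F[X]) :
    wY F * aeval (wX F) p = aeval (wX F) p * wY F + aeval (wX F) (derivative p) := by
  induction p using Polynomial.induction_on' with
  | add p q hp hq =>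
    rw [map_add, mul_add, hp, hq, map_add, map_add, add_mul]
    abel
  | monomial n a =>
    cases n with
    | zero =>
      simp [aeval_monomial, Algebra.commutes]
    | succ n =>
      rw [aeval_monomial, ← mul_assoc, ← Algebra.commutes a (wY F), mul_assoc, comm_pow F n,
        mul_add, ← mul_assoc, derivative_monomial, aeval_monomial]
      congr 1
      rw [nsmul_eq_mul, ← mul_assoc]
      congr 1
      simp [map_mul]

lemma aeval_comm (F : Type) [Field F] (p q : F[X]) :
    aeval (wX F) p * aeval (wX F) q = aeval (wX F) q * aeval (wX F) p := by
  rw [← map_mul, ← map_mul, mul_comm]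

lemma step (F : Type) [Field F] (h : F[X]) (i : ℕ) :
    aeval (wX F) h ^ i * (wY F * aeval (wX F) h + i • aeval (wX F) (derivative h)) =
      wY F * aeval (wX F) h ^ (i + 1) := by
  induction i with
  | zero => simp
  | succ i ih =>
    set H := aeval (wX F) h with hH
    set D := aeval (wX F) (derivative h) with hD
    set y := wY F with hy0
    have hc : y * H = H * y + D := comm_poly F h
    have hy : H * y = y * H - D := by rw [hc]; abel
    have hDH : D * H = H * D := aeval_comm F (derivative h) h
    have key : H * (y * H + (i + 1) • D) = (y * H + i • D) * H := by
      rw [mul_add, ← mul_assoc, hy, sub_mul, add_mul, smul_mul_assoc, hDH, mul_smul_comm,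
        succ_nsmul]
      abel
    rw [pow_succ, mul_assoc, key, ← mul_assoc, ih, mul_assoc, ← pow_succ]

lemma key_all (F : Type) [Field F] (h : F[X]) (i : ℕ) :
    wY F ^ i * aeval (wX F) h ^ i =
      ((List.range i).map
        (fun j => wY F * aeval (wX F) h + j • aeval (wX F) (derivative h))).prod := by
  induction i with
  | zero => simp
  | succ i ih =>
    rw [List.range_succ, List.map_append, List.prod_append, ← ih]
    simp only [List.map_cons, List.map_nil, List.prod_cons, List.prod_nil, mul_one]
    rw [pow_succ (wY F), mul_assoc, ← step F h i, ← mul_assoc]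

/-- The subalgebra `A_h = F⟨x, yh⟩` of the Weyl algebra. -/
noncomputable def Ahsub (F : Type) [Field F] (h : F[X]) : Subalgebra F (Weyl F) :=
  Algebra.adjoin F {wX F, wY F * aeval (wX F) h}

/-- Inside the Weyl algebra, `yⁱhⁱ = ŷ(ŷ+h')(ŷ+2h')⋯(ŷ+(i−1)h')` for `i ≥ 1`,
where `ŷ = y·h(x)`. -/
theorem stmt2 (F : Type) [Field F] (h : F[X]) (hh : h ≠ 0) (i : ℕ) (hi : 1 ≤ i) :
    wY F ^ i * aeval (wX F) h ^ i =
      ((List.range i).map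
        (fun j => wY F * aeval (wX F) h + j • aeval (wX F) (derivative h))).prod := by
  exact key_all F h i
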